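/- arXiv:1507.04691 — 2 statements merged into one kernel-verified Lean document; each statement's English description precedes it below -/
import Mathlib

section
/- Let C be a coaugmented coassociative counital coalgebra over a field k. Then the set Nilp C = ⋃_{m≥1} ker(C → C_+^{⊗(m+1)}), where C_+ = C/k and the maps are induced by iterated comultiplication, is a subcoalgebra of C, and it is the maximal conilpotent subcoalgebra of C. -/
open TensorProduct

noncomputable section

/-- The image of the coaugmentation `k → C`, i.e. the line spanned by the coaugmentation
point `g` (the image of `1 ∈ k`). -/
def Caug (k : Type) [Field k] (C : Type) [AddCommGroup C] [Module k C] (g : C) :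
    Submodule k C := Submodule.span k {g}

/-- The tensor powers `C₊^{⊗(m+1)}` of the coaugmentation cokernel `C₊ = C/k`. -/
def Tp (k : Type) [Field k] (C : Type) [AddCommGroup C] [Module k C] (g : C) :
    ℕ → ModuleCat k
  | 0 => ModuleCat.of k (C ⧸ Caug k C g)
  | m + 1 => ModuleCat.of k ((C ⧸ Caug k C g) ⊗[k] (Tp k C g m))

/-- The iterated comultiplication map `C → C₊^{⊗(m+1)}` of a coaugmented coalgebra. -/
def Phi (k : Type) [Field k] (C : Type) [AddCommGroup C] [Module k C] [Coalgebra k C]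
    (g : C) : ∀ m : ℕ, C →ₗ[k] Tp k C g m
  | 0 => (Caug k C g).mkQ
  | m + 1 => (TensorProduct.map (Caug k C g).mkQ (Phi k C g m)).comp
      (Coalgebra.comul (R := k))

/-- `Nilp C = ⋃_{m} ker (C → C₊^{⊗(m+1)})`. -/
def Nilp (k : Type) [Field k] (C : Type) [AddCommGroup C] [Module k C] [Coalgebra k C]
    (g : C) : Submodule k C := ⨆ m : ℕ, LinearMap.ker (Phi k C g m)

/-!
Over a field `ker (f ⊗ h) = ker f ⊗ W + V ⊗ ker h`, so `Φₘ₊₁ c = 0` says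
`Δ c ∈ k g ⊗ C + C ⊗ ker Φₘ`. By coassociativity `Φₘ₊₁` may also be computed by splitting off
the last tensor factor instead of the first, which gives `Δ c ∈ ker Φₘ ⊗ C + C ⊗ k g`.
As `g` is grouplike it lies in every `ker Φₘ`, so these kernels increase and `Nilp` is their
union. The projection `p c = c - ε(c) g` kills `g` and preserves `ker Φₘ`, hence
`(p ⊗ p) (Δ c) ∈ (ker Φₘ ⊗ C) ∩ (C ⊗ ker Φₘ) = ker Φₘ ⊗ ker Φₘ`, while
`Δ c - (p ⊗ p) (Δ c) = g ⊗ c + c ⊗ g - ε(c) g ⊗ g`. Maximality is immediate.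
-/

section CommRing

variable {R : Type*} [CommRing R] {V W X Y : Type*}
  [AddCommGroup V] [Module R V] [AddCommGroup W] [Module R W]
  [AddCommGroup X] [Module R X] [AddCommGroup Y] [Module R Y]

theorem range_rTensor_subtype (A : Submodule R V) :
    LinearMap.range (A.subtype.rTensor W) = Submodule.map₂ (mk R V W) A ⊤ := by
  rw [LinearMap.rTensor, range_map, Submodule.range_subtype, LinearMap.range_id]

theorem range_lTensor_subtype (B : Submodule R W) :
    LinearMap.range (B.subtype.lTensor V) = Submodule.map₂ (mk R V W) ⊤ B := by
  rw [LinearMap.lTensor, range_map, Submodule.range_subtype, LinearMap.range_id]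

theorem map_map_map₂_mk (f : V →ₗ[R] X) (h : W →ₗ[R] Y) (A : Submodule R V)
    (B : Submodule R W) :
    (Submodule.map₂ (mk R V W) A B).map (map f h) =
      Submodule.map₂ (mk R X Y) (A.map f) (B.map h) := by
  rw [Submodule.map_map₂, Submodule.map₂_map_map]
  rfl

end CommRing

section Field

variable {k : Type*} [Field k] {V W X Y : Type*}
  [AddCommGroup V] [Module k V] [AddCommGroup W] [Module k W]
  [AddCommGroup X] [Module k X] [AddCommGroup Y] [Module k Y]

theorem ker_map_eq_sup (f : V →ₗ[k] X) (h : W →ₗ[k] Y) :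
    LinearMap.ker (map f h) =
      Submodule.map₂ (mk k V W) (LinearMap.ker f) ⊤ ⊔
        Submodule.map₂ (mk k V W) ⊤ (LinearMap.ker h) := by
  have hinj : Function.Injective (map (LinearMap.range f).subtype (LinearMap.range h).subtype) :=
    map_injective_of_flat_flat _ _ (Submodule.injective_subtype _)
      (Submodule.injective_subtype _)
  have hfac : map f h = map (LinearMap.range f).subtype (LinearMap.range h).subtype ∘ₗ
      map f.rangeRestrict h.rangeRestrict := by
    rw [← map_comp]; rfl
  rw [hfac, LinearMap.ker_comp_of_ker_eq_bot _ (LinearMap.ker_eq_bot.2 hinj),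
    map_ker (LinearMap.exact_subtype_ker_map _) f.surjective_rangeRestrict
      (LinearMap.exact_subtype_ker_map _) h.surjective_rangeRestrict,
    range_lTensor_subtype, range_rTensor_subtype, LinearMap.ker_rangeRestrict,
    LinearMap.ker_rangeRestrict, sup_comm]

theorem map₂_mk_inf_map₂_mk (A : Submodule k V) (B : Submodule k W) :
    Submodule.map₂ (mk k V W) A ⊤ ⊓ Submodule.map₂ (mk k V W) ⊤ B =
      Submodule.map₂ (mk k V W) A B := by
  refine le_antisymm ?_
    (le_inf (Submodule.map₂_le_map₂ le_rfl le_top) (Submodule.map₂_le_map₂ le_top le_rfl))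
  obtain ⟨r, hr⟩ := A.subtype.exists_leftInverse_of_injective A.ker_subtype
  set π : V →ₗ[k] V := A.subtype ∘ₗ r
  rintro t ⟨htA, htB⟩
  obtain ⟨s, rfl⟩ : t ∈ LinearMap.range (A.subtype.rTensor W) := by
    rwa [range_rTensor_subtype]
  have hfix : π.rTensor W (A.subtype.rTensor W s) = A.subtype.rTensor W s := by
    rw [← LinearMap.comp_apply, ← LinearMap.rTensor_comp, LinearMap.comp_assoc, hr,
      LinearMap.comp_id]
  have hmem := Submodule.mem_map_of_mem (f := map π LinearMap.id) htB
  rw [map_map_map₂_mk, Submodule.map_id] at hmem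
  rw [← hfix]
  refine Submodule.map₂_le_map₂ ?_ le_rfl hmem
  rintro _ ⟨v, -, rfl⟩
  exact Submodule.coe_mem _

theorem map_mem_map₂_of_mem_sup {p : V →ₗ[k] V} {A N : Submodule k V} (hpA : A.map p = ⊥)
    (hpN : N.map p ≤ N) {t : V ⊗[k] V}
    (h1 : t ∈ Submodule.map₂ (mk k V V) A ⊤ ⊔ Submodule.map₂ (mk k V V) ⊤ N)
    (h2 : t ∈ Submodule.map₂ (mk k V V) N ⊤ ⊔ Submodule.map₂ (mk k V V) ⊤ A) :
    map p p t ∈ Submodule.map₂ (mk k V V) N N := by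
  have h1' := Submodule.mem_map_of_mem (f := map p p) h1
  have h2' := Submodule.mem_map_of_mem (f := map p p) h2
  simp only [Submodule.map_sup, map_map_map₂_mk, hpA, Submodule.map₂_bot_left,
    Submodule.map₂_bot_right, bot_sup_eq, sup_bot_eq] at h1' h2'
  rw [← map₂_mk_inf_map₂_mk]
  exact ⟨Submodule.map₂_le_map₂ hpN le_top h2', Submodule.map₂_le_map₂ le_top hpN h1'⟩

end Field

section Coalgebra

variable {R A : Type*} [CommRing R] [AddCommGroup A] [Module R A] [Coalgebra R A]

theorem Coalgebra.map_comp_comul_map_comp_comul {X Y Z : Type*} [AddCommGroup X] [Module R X]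
    [AddCommGroup Y] [Module R Y] [AddCommGroup Z] [Module R Z]
    (f : A →ₗ[R] X) (h : A →ₗ[R] Y) (u : A →ₗ[R] Z) :
    map f (map h u ∘ₗ comul) ∘ₗ comul =
      (_root_.TensorProduct.assoc R X Y Z).toLinearMap ∘ₗ map (map f h ∘ₗ comul) u ∘ₗ comul := by
  rw [← LinearMap.map_comp_lTensor, LinearMap.comp_assoc, ← Coalgebra.coassoc,
    ← LinearMap.comp_assoc, ← LinearMap.comp_assoc, map_map_comp_assoc_eq, LinearMap.comp_assoc,
    LinearMap.comp_assoc, ← LinearMap.comp_assoc comul (comul.rTensor A),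
    LinearMap.map_comp_rTensor]

variable (R) in
def coaugProj (g : A) : A →ₗ[R] A :=
  LinearMap.id - LinearMap.toSpanSingleton R A g ∘ₗ Coalgebra.counit

theorem coaugProj_apply (g c : A) : coaugProj R g c = c - Coalgebra.counit (R := R) c • g := rfl

theorem map_coaugProj_comul (g c : A) :
    map (coaugProj R g) (coaugProj R g) (Coalgebra.comul (R := R) c) =
      Coalgebra.comul (R := R) c - g ⊗ₜ c - c ⊗ₜ g + Coalgebra.counit (R := R) c • (g ⊗ₜ g) := by
  have hr : (coaugProj R g).rTensor A (Coalgebra.comul (R := R) c) =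
      Coalgebra.comul (R := R) c - g ⊗ₜ c := by
    rw [coaugProj, LinearMap.rTensor_sub, LinearMap.rTensor_id, LinearMap.sub_apply,
      LinearMap.rTensor_comp_apply, Coalgebra.rTensor_counit_comul, LinearMap.id_apply,
      LinearMap.rTensor_tmul, LinearMap.toSpanSingleton_apply, one_smul]
  have hl : (coaugProj R g).lTensor A (Coalgebra.comul (R := R) c) =
      Coalgebra.comul (R := R) c - c ⊗ₜ g := by
    rw [coaugProj, LinearMap.lTensor_sub, LinearMap.lTensor_id, LinearMap.sub_apply,
      LinearMap.lTensor_comp_apply, Coalgebra.lTensor_counit_comul, LinearMap.id_apply,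
      LinearMap.lTensor_tmul, LinearMap.toSpanSingleton_apply, one_smul]
  rw [← LinearMap.lTensor_comp_rTensor, LinearMap.comp_apply, hr, map_sub, hl,
    LinearMap.lTensor_tmul, coaugProj_apply, tmul_sub, tmul_smul]
  abel

end Coalgebra

section Coaugmented

variable {k C : Type} [Field k] [AddCommGroup C] [Module k C] [Coalgebra k C] {g : C}

theorem ker_Phi_zero : LinearMap.ker (Phi k C g 0) = Caug k C g :=
  Submodule.ker_mkQ _

theorem ker_Phi_succ (m : ℕ) :
    LinearMap.ker (Phi k C g (m + 1)) =
      (Submodule.map₂ (mk k C C) (Caug k C g) ⊤ ⊔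
        Submodule.map₂ (mk k C C) ⊤ (LinearMap.ker (Phi k C g m))).comap
          (Coalgebra.comul (R := k)) := by
  change LinearMap.ker (map (Caug k C g).mkQ (Phi k C g m) ∘ₗ Coalgebra.comul) = _
  rw [LinearMap.ker_comp, ker_map_eq_sup, Submodule.ker_mkQ]

theorem Phi_apply_self (hg1 : Coalgebra.comul (R := k) g = g ⊗ₜ[k] g) :
    ∀ m, Phi k C g m g = 0
  | 0 => by
    rw [← LinearMap.mem_ker, ker_Phi_zero]
    exact Submodule.mem_span_singleton_self g
  | m + 1 => by
    change map (Caug k C g).mkQ (Phi k C g m) (Coalgebra.comul g) = 0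
    rw [hg1, map_tmul, Phi_apply_self hg1 m, tmul_zero]

theorem Caug_le_ker_Phi (hg1 : Coalgebra.comul (R := k) g = g ⊗ₜ[k] g) (m : ℕ) :
    Caug k C g ≤ LinearMap.ker (Phi k C g m) :=
  (Submodule.span_singleton_le_iff_mem _ _).2 (Phi_apply_self hg1 m)

theorem monotone_ker_Phi (hg1 : Coalgebra.comul (R := k) g = g ⊗ₜ[k] g) :
    Monotone fun m => LinearMap.ker (Phi k C g m) := by
  refine monotone_nat_of_le_succ fun m => ?_
  induction m with
  | zero => rw [ker_Phi_zero]; exact Caug_le_ker_Phi hg1 1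
  | succ m ih =>
    rw [ker_Phi_succ, ker_Phi_succ]
    exact Submodule.comap_mono (sup_le_sup_left (Submodule.map₂_le_map₂_right ih) _)

theorem ker_Phi_le_Nilp (m : ℕ) : LinearMap.ker (Phi k C g m) ≤ Nilp k C g :=
  le_iSup (fun m => LinearMap.ker (Phi k C g m)) m

theorem mem_Nilp_iff (hg1 : Coalgebra.comul (R := k) g = g ⊗ₜ[k] g) {c : C} :
    c ∈ Nilp k C g ↔ ∃ m, Phi k C g m c = 0 := by
  simp only [Nilp, Submodule.mem_iSup_of_directed _ (monotone_ker_Phi hg1).directed_le,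
    LinearMap.mem_ker]

variable (k C g) in
def Tp.reassoc : ∀ m : ℕ, (Tp k C g m ⊗[k] (C ⧸ Caug k C g)) ≃ₗ[k] Tp k C g (m + 1)
  | 0 => LinearEquiv.refl k _
  | m + 1 => (TensorProduct.assoc k _ _ _).trans ((Tp.reassoc m).lTensor _)

theorem Phi_succ_apply_eq_reassoc (m : ℕ) (c : C) :
    Phi k C g (m + 1) c =
      Tp.reassoc k C g m (map (Phi k C g m) (Caug k C g).mkQ (Coalgebra.comul (R := k) c)) := by
  induction m generalizing c with
  | zero => rfl
  | succ m ih =>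
    have hΦ : Phi k C g (m + 1) = (Tp.reassoc k C g m).toLinearMap ∘ₗ
        map (Phi k C g m) (Caug k C g).mkQ ∘ₗ Coalgebra.comul (R := k) := LinearMap.ext ih
    have hco := LinearMap.congr_fun
      (Coalgebra.map_comp_comul_map_comp_comul (Caug k C g).mkQ (Phi k C g m) (Caug k C g).mkQ) c
    change map (Caug k C g).mkQ (Phi k C g (m + 1)) (Coalgebra.comul c) =
      (Tp.reassoc k C g m).lTensor _ (TensorProduct.assoc k _ _ _
        (map (map (Caug k C g).mkQ (Phi k C g m) ∘ₗ Coalgebra.comul) (Caug k C g).mkQ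
          (Coalgebra.comul c)))
    conv_lhs => rw [hΦ, ← LinearMap.lTensor_comp_map]
    exact congrArg _ hco

theorem ker_Phi_succ' (m : ℕ) :
    LinearMap.ker (Phi k C g (m + 1)) =
      (Submodule.map₂ (mk k C C) (LinearMap.ker (Phi k C g m)) ⊤ ⊔
        Submodule.map₂ (mk k C C) ⊤ (Caug k C g)).comap (Coalgebra.comul (R := k)) := by
  have hΦ : Phi k C g (m + 1) = (Tp.reassoc k C g m).toLinearMap ∘ₗ
      map (Phi k C g m) (Caug k C g).mkQ ∘ₗ Coalgebra.comul (R := k) :=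
    LinearMap.ext (Phi_succ_apply_eq_reassoc m)
  rw [hΦ, LinearEquiv.ker_comp, LinearMap.ker_comp, ker_map_eq_sup, Submodule.ker_mkQ]

theorem map_coaugProj_Caug (hg2 : Coalgebra.counit (R := k) g = 1) :
    (Caug k C g).map (coaugProj k g) = ⊥ := by
  rw [Caug, Submodule.map_span, Set.image_singleton, Submodule.span_singleton_eq_bot,
    coaugProj_apply, hg2, one_smul, sub_self]

theorem map_coaugProj_le {N : Submodule k C} (hg : g ∈ N) : N.map (coaugProj k g) ≤ N := by
  rintro _ ⟨c, hc, rfl⟩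
  exact N.sub_mem hc (N.smul_mem _ hg)

theorem comul_mem_map₂_Nilp (hg1 : Coalgebra.comul (R := k) g = g ⊗ₜ[k] g)
    (hg2 : Coalgebra.counit (R := k) g = 1) {m : ℕ} {c : C} (hc : Phi k C g (m + 1) c = 0) :
    Coalgebra.comul (R := k) c ∈ Submodule.map₂ (mk k C C) (Nilp k C g) (Nilp k C g) := by
  have hgN : g ∈ Nilp k C g := ker_Phi_le_Nilp m (Phi_apply_self hg1 m)
  have hcN : c ∈ Nilp k C g := ker_Phi_le_Nilp (m + 1) hc
  have hred := map_mem_map₂_of_mem_sup (map_coaugProj_Caug hg2)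
    (map_coaugProj_le (Phi_apply_self hg1 m))
    (by rw [← LinearMap.mem_ker, ker_Phi_succ] at hc; exact hc)
    (by rw [← LinearMap.mem_ker, ker_Phi_succ'] at hc; exact hc)
  have hdecomp : Coalgebra.comul (R := k) c =
      map (coaugProj k g) (coaugProj k g) (Coalgebra.comul c) + g ⊗ₜ c + c ⊗ₜ g -
        Coalgebra.counit (R := k) c • (g ⊗ₜ g) := by
    rw [map_coaugProj_comul]; abel
  rw [hdecomp]
  exact sub_mem (add_mem (add_mem
    (Submodule.map₂_le_map₂ (ker_Phi_le_Nilp m) (ker_Phi_le_Nilp m) hred)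
    (Submodule.apply_mem_map₂ _ hgN hcN)) (Submodule.apply_mem_map₂ _ hcN hgN))
    (Submodule.smul_mem _ _ (Submodule.apply_mem_map₂ _ hgN hgN))

end Coaugmented

/-- For a coaugmented coassociative counital coalgebra `C` over a field `k` (with
coaugmentation point `g`, a grouplike element), the subspace
`Nilp C = ⋃_{m ≥ 1} ker (C → C₊^{⊗(m+1)})` is a subcoalgebra of `C` (it contains the
coaugmentation and is carried by the comultiplication into `Nilp C ⊗ Nilp C ⊆ C ⊗ C`),
it is conilpotent (each of its elements is annihilated by some iterated comultiplication
map `C → C₊^{⊗(m+1)}`), and it is the maximal such subcoalgebra: it contains every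
conilpotent subcoalgebra of `C`. -/
theorem stmt_6 (k C : Type) [Field k] [AddCommGroup C] [Module k C] [Coalgebra k C]
    (g : C) (hg1 : Coalgebra.comul (R := k) g = g ⊗ₜ[k] g)
    (hg2 : Coalgebra.counit (R := k) g = 1) :
    g ∈ Nilp k C g ∧
    Submodule.map (Coalgebra.comul (R := k) (A := C)) (Nilp k C g) ≤
      Submodule.map₂ (TensorProduct.mk k C C) (Nilp k C g) (Nilp k C g) ∧
    (∀ c ∈ Nilp k C g, ∃ m, Phi k C g m c = 0) ∧
    (∀ D : Submodule k C, g ∈ D →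
      Submodule.map (Coalgebra.comul (R := k) (A := C)) D ≤
        Submodule.map₂ (TensorProduct.mk k C C) D D →
      (∀ c ∈ D, ∃ m, Phi k C g m c = 0) → D ≤ Nilp k C g) := by
  refine ⟨(mem_Nilp_iff hg1).2 ⟨0, Phi_apply_self hg1 0⟩, ?_, fun c hc => (mem_Nilp_iff hg1).1 hc,
    fun D _ _ hD c hc => (mem_Nilp_iff hg1).2 (hD c hc)⟩
  rintro _ ⟨c, hc, rfl⟩
  obtain ⟨m, hm⟩ := (mem_Nilp_iff hg1).1 hc
  exact comul_mem_map₂_Nilp hg1 hg2 (monotone_ker_Phi hg1 m.le_succ hm)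
end
end

section
/- In a pronilpotent (or formal power series topological) Lie algebra over a field k topologically generated by two elements x and y, any single relation of the form [x,y] + q₃(x,y) + q₄(x,y) + ⋯ = 0, where each q_n is a homogeneous Lie expression of degree n in x and y, implies the relation [x,y] = 0. As a concrete finite instance: in any Lie algebra, if [x,y] = [x,[x,y]] and the iterated adjoint action ad(x) is topologically nilpotent on [x,y] (e.g., in the completion with respect to the lower central series), then [x,y] = 0. -/
/-- In a Lie algebra over a field `k` which is (the image in) a completion with respect to
the lower central series — algebraically, in which the intersection of the lower central
series is zero, which in particular makes the iterated adjoint action `ad(x)` topologically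
nilpotent on `[x,y]` — the relation `[x,y] = [x,[x,y]]` implies `[x,y] = 0`.

This is the concrete finite instance of the fact that in a pronilpotent Lie algebra
topologically generated by `x` and `y`, any relation `[x,y] + q₃(x,y) + q₄(x,y) + ⋯ = 0`
with `q_n` homogeneous Lie expressions of degree `n` implies `[x,y] = 0`. -/
theorem stmt_18 (k L : Type*) [Field k] [LieRing L] [LieAlgebra k L]
    (hres : (⨅ n : ℕ, LieModule.lowerCentralSeries k L L n) = ⊥)
    (x y : L) (h : ⁅x, y⁆ = ⁅x, ⁅x, y⁆⁆) : ⁅x, y⁆ = 0 := by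
  have key : ∀ n : ℕ, ⁅x, y⁆ ∈ LieModule.lowerCentralSeries k L L n := by
    intro n
    induction n with
    | zero => simp [LieModule.lowerCentralSeries]
    | succ n ih =>
      rw [h, LieModule.lowerCentralSeries_succ]
      exact LieSubmodule.lie_mem_lie (LieSubmodule.mem_top x) ih
  have : ⁅x, y⁆ ∈ (⨅ n : ℕ, LieModule.lowerCentralSeries k L L n) :=
    LieSubmodule.mem_iInf _ |>.mpr key
  rwa [hres, LieSubmodule.mem_bot] at this
end
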